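/- Let E be a set of locally finite perimeter in R^n with (n−1)-Ahlfors regular perimeter measure with constant C_A up to scale r_0, let Q ∈ ∂E and 0 < r < r_0. If the average normal (ν_E)_{Q,r} over B(Q,r) ∩ ∂*E is nonzero, then the cylindrical excess at scale r/√2 in the direction (ν_E)_{Q,r}/|(ν_E)_{Q,r}| is bounded by a constant (depending only on n and C_A) times the mean square oscillation ⨍_{B(Q,r)∩∂*E} |ν_E − (ν_E)_{Q,r}|² dH^{n-1}, provided this mean square oscillation is less than 1. -/

import Mathlib

open MeasureTheory Metric Set Filter
open scoped ENNReal NNReal RealInnerProductSpace Topology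

noncomputable section

abbrev En (n : ℕ) : Type := EuclideanSpace ℝ (Fin n)

variable {n : ℕ}

/-- Divergence of a vector field on `ℝⁿ`. -/
def divg (T : En n → En n) (x : En n) : ℝ :=
  ∑ i, ⟪fderiv ℝ T x (EuclideanSpace.single i 1), EuclideanSpace.single i 1⟫

/-- A set has locally finite perimeter if, for every compact set `K`, the variation
over vector fields supported in `K` with sup-norm at most 1 is finite. -/
def HasLocFinPerimeter (E : Set (En n)) : Prop :=
  ∀ K : Set (En n), IsCompact K →
    BddAbove {v : ℝ | ∃ T : En n → En n, ContDiff ℝ 1 T ∧ tsupport T ⊆ K ∧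
      (∀ x, ‖T x‖ ≤ 1) ∧ v = ∫ x in E, divg T x}

/-- A set of locally finite perimeter bundled with its reduced boundary and
measure-theoretic outer unit normal. -/
structure FinPerimeterSet (n : ℕ) where
  carrier : Set (En n)
  locFin : HasLocFinPerimeter carrier
  redBdry : Set (En n)
  nuE : En n → En n
  redBdry_subset : redBdry ⊆ frontier carrier
  nuE_unit : ∀ x ∈ redBdry, ‖nuE x‖ = 1

/-- The cylinder with center `x`, radius and height `r`, and axial direction `ν`. -/
def cylinder (x : En n) (r : ℝ) (ν : En n) : Set (En n) :=
  {y | |⟪x - y, ν⟫| < r ∧ ‖x - y - ⟪x - y, ν⟫ • ν‖ < r}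

/-- The cylindrical excess of a set whose reduced boundary is `S` and whose
measure-theoretic outer unit normal is `nu`. -/
def excess (S : Set (En n)) (nu : En n → En n) (x : En n) (r : ℝ) (ν : En n) : ℝ :=
  (1 / r ^ (n - 1)) * ∫ y in cylinder x r ν ∩ S, ‖nu y - ν‖ ^ 2 / 2 ∂μH[(n : ℝ) - 1]

/-- The perimeter measure `|μ_E| = H^{n-1} ⌊ ∂*E`. -/
def perimMeasure (E : FinPerimeterSet n) : Measure (En n) :=
  (μH[(n : ℝ) - 1] : Measure (En n)).restrict E.redBdry

/-- The support of a measure. -/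
def measureSupport (μ : Measure (En n)) : Set (En n) :=
  {x | ∀ r : ℝ, 0 < r → 0 < μ (ball x r)}

/-- `(n-1)`-Ahlfors regularity, with constant `C`, up to scale `r₀`, of a measure `μ`
at points of the set `F`. -/
def AhlforsRegUpTo (μ : Measure (En n)) (F : Set (En n)) (C r₀ : ℝ) : Prop :=
  ∀ x ∈ F, ∀ s : ℝ, 0 < s → s < r₀ →
    ENNReal.ofReal (C⁻¹ * s ^ (n - 1)) ≤ μ (ball x s) ∧
    μ (ball x s) ≤ ENNReal.ofReal (C * s ^ (n - 1))

/-! The normalized average `ν̂ = νavg / ‖νavg‖` is the point of the unit sphere nearest to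
`νavg`, so `‖νavg - ν̂‖ ≤ ‖ν_E - νavg‖` pointwise on `∂*E`, and integrating
`‖ν_E - ν̂‖² ≤ 2‖ν_E - νavg‖² + 2‖νavg - ν̂‖²` over `B(Q,r) ∩ ∂*E` gives
`∫ ‖ν_E - ν̂‖² ≤ 4 ε |μ_E|(B(Q,r))`. The cylinder of radius `r/√2` lies in `B(Q,r)`, and the
upper Ahlfors bound `|μ_E|(B(Q,r)) ≤ C_A r^{n-1} = C_A √2^{n-1} (r/√2)^{n-1}` turns this into
the estimate with `C = 2 √2^{n-1} C_A`. -/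

/-- Unlike `ae_restrict_of_forall_mem`, `s` need not be measurable. -/
theorem ae_restrict_of_forall_mem_of_aemeasurable {α β : Type*} [MeasurableSpace α]
    [MeasurableSpace β] {μ : Measure α} {s : Set α} {f : α → β} {t : Set β}
    (hf : AEMeasurable f (μ.restrict s)) (ht : MeasurableSet t) (h : ∀ x ∈ s, f x ∈ t) :
    ∀ᵐ x ∂μ.restrict s, f x ∈ t := by
  have hnull : μ ({x | f x ≠ hf.mk f x} ∩ s) = 0 :=
    nonpos_iff_eq_zero.1 ((Measure.le_restrict_apply _ _).trans_eq (ae_iff.1 hf.ae_eq_mk))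
  have hmk : ∀ᵐ x ∂μ.restrict s, hf.mk f x ∈ t := by
    rw [ae_restrict_iff (hf.measurable_mk ht), ae_iff]
    refine measure_mono_null (fun x hx => ?_) hnull
    obtain ⟨hxs, hxt⟩ := Classical.not_imp.1 hx
    exact ⟨fun hfx => hxt (hfx ▸ h x hxs), hxs⟩
  filter_upwards [hmk, hf.ae_eq_mk] with x hx hfx
  rwa [hfx]

theorem norm_sub_inv_norm_smul_le {E : Type*} [SeminormedAddCommGroup E] [NormedSpace ℝ E]
    {u : E} (hu : ‖u‖ = 1) (c : E) : ‖c - ‖c‖⁻¹ • c‖ ≤ ‖u - c‖ := by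
  rcases eq_or_ne ‖c‖ 0 with hc | hc
  · simp [hc]
  have hsmul : c - ‖c‖⁻¹ • c = (1 - ‖c‖⁻¹) • c := by rw [sub_smul, one_smul]
  calc ‖c - ‖c‖⁻¹ • c‖ = |‖u‖ - ‖c‖| := by
        rw [hsmul, norm_smul, Real.norm_eq_abs, hu, ← abs_norm c, ← abs_mul, abs_norm,
          abs_sub_comm]
        congr 1
        field_simp
    _ ≤ ‖u - c‖ := abs_norm_sub_norm_le u c

section FiniteMeasure

variable {α E : Type*} [MeasurableSpace α] {μ : Measure α} [IsFiniteMeasure μ]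
  [SeminormedAddCommGroup E] {f : α → E}

theorem integrable_norm_sub_sq (hf : AEStronglyMeasurable f μ) {M : ℝ}
    (hM : ∀ᵐ x ∂μ, ‖f x‖ ≤ M) (c : E) : Integrable (fun x => ‖f x - c‖ ^ 2) μ := by
  refine .of_bound ((hf.sub aestronglyMeasurable_const).norm.pow 2) ((M + ‖c‖) ^ 2) ?_
  filter_upwards [hM] with x hx
  rw [norm_pow, norm_norm]
  exact pow_le_pow_left₀ (norm_nonneg _) ((norm_sub_le _ _).trans (by linarith)) 2

theorem integral_norm_sub_normalize_sq_le [NormedSpace ℝ E] (hf : AEStronglyMeasurable f μ)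
    (hf1 : ∀ᵐ x ∂μ, ‖f x‖ = 1) (c : E) :
    ∫ x, ‖f x - ‖c‖⁻¹ • c‖ ^ 2 ∂μ ≤ 4 * ∫ x, ‖f x - c‖ ^ 2 ∂μ := by
  set ν := ‖c‖⁻¹ • c
  have hI := integrable_norm_sub_sq hf (hf1.mono fun x hx => hx.le) c
  have hsphere : μ.real univ * ‖c - ν‖ ^ 2 ≤ ∫ x, ‖f x - c‖ ^ 2 ∂μ := by
    rw [← smul_eq_mul, ← integral_const]
    exact integral_mono_ae (integrable_const _) hI (hf1.mono fun x hx =>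
      pow_le_pow_left₀ (norm_nonneg _) (norm_sub_inv_norm_smul_le hx c) 2)
  have hpt : ∀ x, ‖f x - ν‖ ^ 2 ≤ 2 * ‖f x - c‖ ^ 2 + 2 * ‖c - ν‖ ^ 2 := fun x => by
    nlinarith [norm_sub_le_norm_sub_add_norm_sub (f x) c ν, norm_nonneg (f x - ν),
      sq_nonneg (‖f x - c‖ - ‖c - ν‖)]
  calc ∫ x, ‖f x - ν‖ ^ 2 ∂μ ≤ ∫ x, (2 * ‖f x - c‖ ^ 2 + 2 * ‖c - ν‖ ^ 2) ∂μ :=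
        integral_mono_of_nonneg (ae_of_all _ fun x => by positivity)
          ((hI.const_mul 2).add (integrable_const _)) (ae_of_all _ hpt)
    _ = 2 * ∫ x, ‖f x - c‖ ^ 2 ∂μ + 2 * (μ.real univ * ‖c - ν‖ ^ 2) := by
        rw [integral_add (hI.const_mul 2) (integrable_const _), integral_const_mul,
          integral_const, smul_eq_mul]
        ring
    _ ≤ 4 * ∫ x, ‖f x - c‖ ^ 2 ∂μ := by linarith

end FiniteMeasure

theorem setIntegral_norm_sub_normalize_sq_le {α E : Type*} [MeasurableSpace α] {μ : Measure α}
    [SeminormedAddCommGroup E] [NormedSpace ℝ E] {f : α → E} {s K : Set α} (hs : μ s ≠ ∞)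
    (hK : K ⊆ s) (hf : AEStronglyMeasurable f (μ.restrict s)) (hf1 : ∀ x ∈ s, ‖f x‖ = 1)
    (c : E) : ∫ x in K, ‖f x - ‖c‖⁻¹ • c‖ ^ 2 ∂μ ≤ 4 * ∫ x in s, ‖f x - c‖ ^ 2 ∂μ := by
  have : IsFiniteMeasure (μ.restrict s) := isFiniteMeasure_restrict.2 hs
  have hunit : ∀ᵐ x ∂μ.restrict s, ‖f x‖ = 1 :=
    ae_restrict_of_forall_mem_of_aemeasurable hf.norm.aemeasurable (measurableSet_singleton 1) hf1
  calc ∫ x in K, ‖f x - ‖c‖⁻¹ • c‖ ^ 2 ∂μ ≤ ∫ x in s, ‖f x - ‖c‖⁻¹ • c‖ ^ 2 ∂μ :=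
        setIntegral_mono_set (integrable_norm_sub_sq hf (hunit.mono fun x hx => hx.le) _)
          (ae_of_all _ fun x => by positivity) hK.eventuallyLE
    _ ≤ 4 * ∫ x in s, ‖f x - c‖ ^ 2 ∂μ := integral_norm_sub_normalize_sq_le hf hunit c

theorem norm_sq_eq_inner_sq_add_norm_sub_inner_smul_sq {F : Type*} [NormedAddCommGroup F]
    [InnerProductSpace ℝ F] {ν : F} (hν : ‖ν‖ = 1) (v : F) :
    ‖v‖ ^ 2 = ⟪v, ν⟫ ^ 2 + ‖v - ⟪v, ν⟫ • ν‖ ^ 2 := by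
  rw [norm_sub_sq_real, real_inner_smul_right, norm_smul, Real.norm_eq_abs, mul_pow, sq_abs, hν]
  ring

theorem cylinder_div_sqrt_two_subset_ball {x ν : En n} (hν : ‖ν‖ = 1) (r : ℝ) :
    cylinder x (r / √2) ν ⊆ ball x r := by
  rintro y ⟨hax, hrad⟩
  have hr : 0 < r := (div_pos_iff_of_pos_right (by positivity)).1 ((abs_nonneg _).trans_lt hax)
  have h1 : ⟪x - y, ν⟫ ^ 2 < (r / √2) ^ 2 := by
    rw [← sq_abs]
    exact pow_lt_pow_left₀ hax (abs_nonneg _) two_ne_zero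
  have h2 := pow_lt_pow_left₀ hrad (norm_nonneg _) two_ne_zero
  rw [div_pow, Real.sq_sqrt zero_le_two] at h1 h2
  rw [mem_ball, dist_comm, dist_eq_norm]
  refine lt_of_pow_lt_pow_left₀ 2 hr.le ?_
  rw [norm_sq_eq_inner_sq_add_norm_sub_inner_smul_sq hν]
  linarith

theorem excess_le_const_mul_osc_general (n : ℕ) (C_A : ℝ) (hCA : 1 ≤ C_A) :
    ∃ C > (0:ℝ), ∀ (E : FinPerimeterSet n) (r₀ : ℝ), 0 < r₀ →
      AhlforsRegUpTo (perimMeasure E) (frontier E.carrier) C_A r₀ →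
      frontier E.carrier = measureSupport (perimMeasure E) →
      ∀ Q ∈ frontier E.carrier, ∀ r : ℝ, 0 < r → r < r₀ →
      ∀ νavg : En n, νavg = (⨍ z in ball Q r ∩ E.redBdry, E.nuE z ∂μH[(n : ℝ) - 1]) →
      ∀ ε : ℝ, ε = (⨍ y in ball Q r ∩ E.redBdry, ‖E.nuE y - νavg‖ ^ 2 ∂μH[(n : ℝ) - 1]) →
        νavg ≠ 0 → ε < 1 →
        excess E.redBdry E.nuE Q (r / Real.sqrt 2) (‖νavg‖⁻¹ • νavg) ≤ C * ε := by
  refine ⟨2 * √2 ^ (n - 1) * C_A, by positivity, ?_⟩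
  intro E r₀ _ hAhl _ Q hQ r hr hrr₀ νavg hνavg ε hε hν0 _
  set μ : Measure (En n) := μH[(n : ℝ) - 1]
  set A := ball Q r ∩ E.redBdry
  have hμA : μ A ≤ ENNReal.ofReal (C_A * r ^ (n - 1)) := by
    simpa [perimMeasure, Measure.restrict_apply measurableSet_ball] using (hAhl Q hQ r hr hrr₀).2
  have hμA_ne_top : μ A ≠ ∞ := ne_top_of_le_ne_top ENNReal.ofReal_ne_top hμA
  have hμA' : μ.real A ≤ C_A * r ^ (n - 1) := ENNReal.toReal_le_of_le_ofReal (by positivity) hμA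
  have hmeas : AEStronglyMeasurable E.nuE (μ.restrict A) :=
    (Integrable.of_integral_ne_zero fun h => hν0 (by rw [hνavg, setAverage_eq, h, smul_zero])).1
  have hosc : ∫ y in A, ‖E.nuE y - νavg‖ ^ 2 ∂μ = μ.real A * ε := by
    rw [hε, ← smul_eq_mul, measure_smul_setAverage _ hμA_ne_top]
  have hε0 : 0 ≤ ε := by
    rw [hε, setAverage_eq, smul_eq_mul]
    exact mul_nonneg (by positivity) (integral_nonneg fun y => by positivity)
  have hcyl : cylinder Q (r / √2) (‖νavg‖⁻¹ • νavg) ∩ E.redBdry ⊆ A :=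
    inter_subset_inter_left _ (cylinder_div_sqrt_two_subset_ball (norm_smul_inv_norm hν0) r)
  have hint := setIntegral_norm_sub_normalize_sq_le hμA_ne_top hcyl hmeas
    (fun y hy => E.nuE_unit y hy.2) νavg
  have hscale : (r / √2) ^ (n - 1) * √2 ^ (n - 1) = r ^ (n - 1) := by
    rw [← mul_pow, div_mul_cancel₀ r (by positivity)]
  calc excess E.redBdry E.nuE Q (r / √2) (‖νavg‖⁻¹ • νavg)
      ≤ ((r / √2) ^ (n - 1))⁻¹ * (2 * (C_A * r ^ (n - 1) * ε)) := by
        rw [excess, one_div, integral_div]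
        gcongr
        nlinarith [mul_le_mul_of_nonneg_right hμA' hε0]
    _ = 2 * √2 ^ (n - 1) * C_A * ε := by
        rw [← hscale]
        field_simp

/-- if the average normal `(ν_E)_{Q,r}` is nonzero and the mean square
oscillation of the normal on `B(Q,r) ∩ ∂*E` is `< 1`, then the cylindrical excess at
scale `r/√2` in the averaged direction is bounded by `C(n,C_A)` times that oscillation. -/
theorem excess_le_const_mul_osc (n : ℕ) (hn : 2 ≤ n) (C_A : ℝ) (hCA : 1 ≤ C_A) :
    ∃ C > (0:ℝ), ∀ (E : FinPerimeterSet n) (r₀ : ℝ), 0 < r₀ →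
      AhlforsRegUpTo (perimMeasure E) (frontier E.carrier) C_A r₀ →
      frontier E.carrier = measureSupport (perimMeasure E) →
      ∀ Q ∈ frontier E.carrier, ∀ r : ℝ, 0 < r → r < r₀ →
      ∀ νavg : En n, νavg = (⨍ z in ball Q r ∩ E.redBdry, E.nuE z ∂μH[(n : ℝ) - 1]) →
      ∀ ε : ℝ, ε = (⨍ y in ball Q r ∩ E.redBdry, ‖E.nuE y - νavg‖ ^ 2 ∂μH[(n : ℝ) - 1]) →
        νavg ≠ 0 → ε < 1 →
        excess E.redBdry E.nuE Q (r / Real.sqrt 2) (‖νavg‖⁻¹ • νavg) ≤ C * ε :=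
  excess_le_const_mul_osc_general n C_A hCA
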